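/- arXiv:1902.01149 — 3 statements merged into one kernel-verified Lean document; each statement's English description precedes it below -/
import Mathlib

section
/- Let 𝔖₁,…,𝔖_s be finite systems of polynomial equations with rational coefficients, each dilation invariant and partition regular over ℕ. Then for any finite colouring ℕ = C₁ ∪ ⋯ ∪ C_r there exists a colour class C_t such that every 𝔖_i has a solution all of whose entries lie in C_t. -/
/-!
Call `S ⊆ ℕ` multiplicatively piecewise syndetic if finitely many quotients `S / u` cover a
multiplicatively thick set. If a thick set is split into `A ∪ B`, either `B` is thick or the
finite set witnessing that it is not makes `A` piecewise syndetic; peeling off the colours one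
at a time, some colour class is piecewise syndetic. On the other hand, a dilation invariant
partition regular system has monochromatic solutions inside every thick set (dilate solutions
into the thick set and pass to an ultrafilter limit), and colouring `a` by `{u ∈ F | a * u ∈ S}`
turns such a solution into one inside any piecewise syndetic `S`.
-/

open MvPolynomial

/-- `x : ℕ^s` is a solution of the system given by polynomials `p j`:
all entries are positive integers and every polynomial vanishes at `x`. -/
def IsSolution {s k : ℕ} (p : Fin k → MvPolynomial (Fin s) ℚ) (x : Fin s → ℕ) : Prop :=
  (∀ i, 0 < x i) ∧ ∀ j, eval (fun i => (x i : ℚ)) (p j) = 0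

/-- A tuple is non-trivial if its coordinates are not all equal. -/
def IsNontrivial {s : ℕ} (x : Fin s → ℕ) : Prop :=
  ∃ i j, x i ≠ x j

/-- The system is dilation invariant: rational solutions are preserved by dilations. -/
def DilationInvariant {s k : ℕ} (p : Fin k → MvPolynomial (Fin s) ℚ) : Prop :=
  ∀ x : Fin s → ℚ, (∀ j, eval x (p j) = 0) →
    ∀ lam : ℚ, ∀ j, eval (fun i => lam * x i) (p j) = 0

/-- The system is `r`-regular over `X ⊆ ℕ`: every `r`-colouring of ℕ admits a
monochromatic non-trivial solution with all coordinates in `X`. -/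
def RRegularOver {s k : ℕ} (p : Fin k → MvPolynomial (Fin s) ℚ) (X : Set ℕ) (r : ℕ) : Prop :=
  ∀ χ : ℕ → Fin r, ∃ x : Fin s → ℕ, IsSolution p x ∧ IsNontrivial x ∧
    (∀ i, x i ∈ X) ∧ ∀ i j, χ (x i) = χ (x j)

/-- The system is partition regular over `X`: `r`-regular over `X` for every `r`. -/
def PartitionRegularOver {s k : ℕ} (p : Fin k → MvPolynomial (Fin s) ℚ) (X : Set ℕ) : Prop :=
  ∀ r : ℕ, RRegularOver p X r

/-- `S` is multiplicatively `F`-syndetic: every positive `n` has some `t ∈ F` with `n*t ∈ S`. -/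
def MultSyndeticWith (F : Finset ℕ) (S : Set ℕ) : Prop :=
  ∀ n : ℕ, 0 < n → ∃ t ∈ F, n * t ∈ S

/-- `S` is multiplicatively syndetic: multiplicatively `F`-syndetic for some nonempty
finite set `F` of positive integers. -/
def MultSyndetic (S : Set ℕ) : Prop :=
  ∃ F : Finset ℕ, F.Nonempty ∧ (∀ t ∈ F, 0 < t) ∧ MultSyndeticWith F S

/-- `T` is multiplicatively thick: every finite set of positive integers has a dilate inside `T`. -/
def MultThick (T : Set ℕ) : Prop :=
  ∀ F : Finset ℕ, (∀ t ∈ F, 0 < t) → ∃ n : ℕ, 0 < n ∧ ∀ t ∈ F, n * t ∈ T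

def MultPiecewiseSyndetic (S : Set ℕ) : Prop :=
  ∃ F : Finset ℕ, (∀ u ∈ F, 0 < u) ∧ MultThick {a | ∃ u ∈ F, a * u ∈ S}

lemma PartitionRegularOver.exists_monochromatic {s k : ℕ} {p : Fin k → MvPolynomial (Fin s) ℚ}
    {X : Set ℕ} (hpr : PartitionRegularOver p X) {β : Type*} [Finite β] (χ : ℕ → β) :
    ∃ x : Fin s → ℕ, IsSolution p x ∧ IsNontrivial x ∧
      (∀ i, x i ∈ X) ∧ ∀ i j, χ (x i) = χ (x j) := by
  obtain ⟨r, ⟨e⟩⟩ := Finite.exists_equiv_fin β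
  obtain ⟨x, hx, hnt, hX, hmono⟩ := hpr r (e ∘ χ)
  exact ⟨x, hx, hnt, hX, fun i j => e.injective (hmono i j)⟩

lemma IsSolution.dilate {s k : ℕ} {p : Fin k → MvPolynomial (Fin s) ℚ} {x : Fin s → ℕ}
    (hx : IsSolution p x) (hdil : DilationInvariant p) {c : ℕ} (hc : 0 < c) :
    IsSolution p (fun i => c * x i) := by
  refine ⟨fun i => Nat.mul_pos hc (hx.1 i), fun j => ?_⟩
  simpa only [Nat.cast_mul] using hdil _ hx.2 c j

/-- Colour `a` by the colour that `χ (n N * a)` takes for ultrafilter-almost all `N`, where `n N`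
dilates `[1, N]` into `T`. -/
lemma MultThick.exists_monochromatic_solution {s k : ℕ} {p : Fin k → MvPolynomial (Fin s) ℚ}
    {X : Set ℕ} (hdil : DilationInvariant p) (hpr : PartitionRegularOver p X)
    {T : Set ℕ} (hT : MultThick T) {β : Type*} [Finite β] (χ : ℕ → β) :
    ∃ x : Fin s → ℕ, IsSolution p x ∧ (∀ j, x j ∈ T) ∧ ∀ j j', χ (x j) = χ (x j') := by
  choose n hn_pos hnT using fun N : ℕ =>
    hT (Finset.Icc 1 N) fun t ht => (Finset.mem_Icc.1 ht).1
  let U := Filter.hyperfilter ℕ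
  have hlim : ∀ a, ∃ b, ∀ᶠ N in (U : Filter ℕ), χ (n N * a) = b := fun a =>
    Ultrafilter.eventually_exists_iff.1 (Filter.Eventually.of_forall fun _ => ⟨_, rfl⟩)
  choose ψ hψ using hlim
  obtain ⟨x, hx, -, -, hψx⟩ := hpr.exists_monochromatic ψ
  have hev : ∀ᶠ N in (U : Filter ℕ),
      (∀ j, χ (n N * x j) = ψ (x j)) ∧ Finset.univ.sup x ≤ N :=
    (Filter.eventually_all.2 fun j => hψ (x j)).and
      ((Filter.eventually_ge_atTop _).filter_mono Nat.hyperfilter_le_atTop)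
  obtain ⟨N, hχ, hN⟩ := hev.exists
  refine ⟨fun j => n N * x j, hx.dilate hdil (hn_pos N), fun j => hnT N _ ?_, fun j j' => ?_⟩
  · exact Finset.mem_Icc.2 ⟨hx.1 j, (Finset.le_sup (Finset.mem_univ j)).trans hN⟩
  · simp only [hχ, hψx j j']

lemma MultThick.nonempty {T : Set ℕ} (hT : MultThick T) : T.Nonempty := by
  obtain ⟨n, -, hn⟩ := hT {1} (by simp)
  exact ⟨n * 1, hn 1 (Finset.mem_singleton_self 1)⟩

lemma MultThick.multPiecewiseSyndetic_or_multThick {T A B : Set ℕ} (hT : MultThick T)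
    (hAB : T ⊆ A ∪ B) : MultPiecewiseSyndetic A ∨ MultThick B := by
  classical
  refine or_iff_not_imp_right.2 fun hB => ?_
  simp only [MultThick, not_forall, not_exists, not_and] at hB
  obtain ⟨F, hF_pos, hF⟩ := hB
  refine ⟨F, hF_pos, fun G hG_pos => ?_⟩
  have hGF_pos : ∀ t ∈ (G ×ˢ F).image (fun q => q.1 * q.2), 0 < t := by
    simp only [Finset.mem_image, Finset.mem_product, Prod.exists]
    rintro _ ⟨g, u, ⟨hg, hu⟩, rfl⟩
    exact Nat.mul_pos (hG_pos g hg) (hF_pos u hu)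
  obtain ⟨n, hn_pos, hnT⟩ := hT _ hGF_pos
  refine ⟨n, hn_pos, fun g hg => ?_⟩
  obtain ⟨u, hu, hnotB⟩ := hF (n * g) (Nat.mul_pos hn_pos (hG_pos g hg))
  have hT' : n * g * u ∈ T := by
    rw [mul_assoc]
    exact hnT _ (Finset.mem_image.2 ⟨(g, u), Finset.mem_product.2 ⟨hg, hu⟩, rfl⟩)
  exact ⟨u, hu, (hAB hT').resolve_right hnotB⟩

lemma MultThick.exists_multPiecewiseSyndetic {ι : Type*} [Finite ι] {T : Set ℕ}
    (hT : MultThick T) {A : ι → Set ℕ} (hA : T ⊆ ⋃ i, A i) :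
    ∃ i, MultPiecewiseSyndetic (A i) := by
  classical
  have key : ∀ (s : Finset ι) (T : Set ℕ), MultThick T → T ⊆ ⋃ i ∈ s, A i →
      ∃ i, MultPiecewiseSyndetic (A i) := by
    intro s
    induction s using Finset.induction_on with
    | empty =>
      intro T hT hsub
      obtain ⟨a, ha⟩ := hT.nonempty
      simpa using hsub ha
    | insert i s _ ih =>
      intro T hT hsub
      have hsplit : T ⊆ A i ∪ (T ∩ ⋃ j ∈ s, A j) := fun a ha => by
        have := hsub ha
        simp only [Finset.mem_insert, Set.mem_iUnion, exists_prop] at this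
        obtain ⟨j, rfl | hj, haj⟩ := this
        · exact Or.inl haj
        · exact Or.inr ⟨ha, Set.mem_biUnion hj haj⟩
      rcases hT.multPiecewiseSyndetic_or_multThick hsplit with hPS | hthick
      · exact ⟨i, hPS⟩
      · exact ih _ hthick Set.inter_subset_right
  have := Fintype.ofFinite ι
  exact key Finset.univ T hT (by simpa using hA)

/-- A solution in the thick set that is monochromatic for the colouring `a ↦ {u ∈ F | a * u ∈ S}`
has one `u` serving all its coordinates; dilate by it. -/
lemma MultPiecewiseSyndetic.exists_solution {s k : ℕ} {p : Fin k → MvPolynomial (Fin s) ℚ}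
    {X : Set ℕ} (hdil : DilationInvariant p) (hpr : PartitionRegularOver p X)
    {S : Set ℕ} (hS : MultPiecewiseSyndetic S) :
    ∃ x : Fin s → ℕ, IsSolution p x ∧ ∀ j, x j ∈ S := by
  obtain ⟨F, hF_pos, hthick⟩ := hS
  obtain ⟨x, hx, hxT, hmono⟩ := hthick.exists_monochromatic_solution hdil hpr
    (fun a => {u : F | a * u ∈ S})
  suffices ∃ c, 0 < c ∧ ∀ j, c * x j ∈ S from
    let ⟨c, hc, hcS⟩ := this; ⟨_, hx.dilate hdil hc, hcS⟩
  rcases isEmpty_or_nonempty (Fin s) with hs | ⟨⟨j₀⟩⟩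
  · exact ⟨1, one_pos, isEmptyElim⟩
  · obtain ⟨u, hu, huS⟩ := hxT j₀
    refine ⟨u, hF_pos u hu, fun j => ?_⟩
    have : (⟨u, hu⟩ : F) ∈ {u : F | x j * u ∈ S} := by rw [hmono j j₀]; exact huS
    rw [mul_comm]
    exact this

theorem consistency_theorem_general (m : ℕ) (v k : Fin m → ℕ)
    (p : ∀ i, Fin (k i) → MvPolynomial (Fin (v i)) ℚ)
    (hdil : ∀ i, DilationInvariant (p i))
    (hpr : ∀ i, PartitionRegularOver (p i) {n : ℕ | 0 < n})
    (r : ℕ) (χ : ℕ → Fin r) :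
    ∃ t : Fin r, ∀ i, ∃ x : Fin (v i) → ℕ,
      IsSolution (p i) x ∧ ∀ j, χ (x j) = t := by
  have huniv : MultThick (Set.univ : Set ℕ) := fun _ _ => ⟨1, one_pos, fun _ _ => trivial⟩
  obtain ⟨t, ht⟩ := huniv.exists_multPiecewiseSyndetic (A := fun t => χ ⁻¹' {t})
    fun a _ => Set.mem_iUnion.2 ⟨χ a, rfl⟩
  exact ⟨t, fun i => ht.exists_solution (hdil i) (hpr i)⟩

/-- Dilation invariant consistency theorem: if `𝔖₁,…,𝔖_m` are
dilation invariant partition regular systems, then any finite colouring of ℕ has a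
colour class containing a solution of every system. -/
theorem consistency_theorem (m : ℕ) (v k : Fin m → ℕ)
    (p : ∀ i, Fin (k i) → MvPolynomial (Fin (v i)) ℚ)
    (hdil : ∀ i, DilationInvariant (p i))
    (hpr : ∀ i, PartitionRegularOver (p i) {n : ℕ | 0 < n})
    (r : ℕ) (hr : 0 < r) (χ : ℕ → Fin r) :
    ∃ t : Fin r, ∀ i, ∃ x : Fin (v i) → ℕ,
      IsSolution (p i) x ∧ ∀ j, χ (x j) = t :=
  consistency_theorem_general m v k p hdil hpr r χ
end

section
/- Let 𝔖 be a dilation invariant finite system of polynomial equations with rational coefficients, and let r ∈ ℕ. If 𝔖 is r-regular over ℕ, then there exists a nonempty finite set F ⊂ ℕ (depending only on 𝔖 and r) such that: for every (r+1)-colouring ℕ = C₁ ∪ ⋯ ∪ C_{r+1} which has no monochromatic non-trivial solution to 𝔖, every colour class C_i is multiplicatively F-syndetic. -/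
/-!
Compactness makes `r`-regularity uniform: along an ultrafilter, colourings that defeat every
bound `N` converge pointwise to a colouring with no monochromatic solution at all. So every
`r`-colouring has a monochromatic solution with entries in `F = {1, …, N + 1}`. If a colour `c`
of an `(r+1)`-colouring `χ` missed all of `n • F`, then `t ↦ χ (n * t)` would be an `r`-colouring
of `F`, which has a monochromatic solution `x`; by dilation invariance `n • x` is a monochromatic
solution for `χ`.
-/

open MvPolynomial

open Filter

section

variable {s k : ℕ} {p : Fin k → MvPolynomial (Fin s) ℚ}

theorem IsSolution.mul_left (hdil : DilationInvariant p) {x : Fin s → ℕ} (hx : IsSolution p x)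
    {n : ℕ} (hn : 0 < n) : IsSolution p (fun i => n * x i) := by
  refine ⟨fun i => Nat.mul_pos hn (hx.1 i), fun j => ?_⟩
  simpa only [Nat.cast_mul] using hdil (fun i => (x i : ℚ)) hx.2 n j

theorem IsNontrivial.mul_left {x : Fin s → ℕ} (hx : IsNontrivial x) {n : ℕ} (hn : n ≠ 0) :
    IsNontrivial (fun i => n * x i) := by
  obtain ⟨i, j, hij⟩ := hx
  exact ⟨i, j, fun h => hij (Nat.eq_of_mul_eq_mul_left (Nat.pos_of_ne_zero hn) h)⟩

theorem RRegularOver.exists_bound {r : ℕ} (hreg : RRegularOver p {n : ℕ | 0 < n} r) :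
    ∃ N : ℕ, ∀ χ : ℕ → Fin r, ∃ x : Fin s → ℕ, IsSolution p x ∧ IsNontrivial x ∧
      (∀ i, x i ≤ N) ∧ ∀ i j, χ (x i) = χ (x j) := by
  by_contra! h
  choose χs hχs using h
  let U : Ultrafilter ℕ := Ultrafilter.of atTop
  have hlim : ∀ m, ∃ c, ∀ᶠ N in (U : Filter ℕ), χs N m = c := fun m => by
    obtain ⟨c, hc⟩ := (U.map (χs · m)).eq_pure_of_finite
    exact ⟨c, Ultrafilter.mem_map.1 (hc ▸ rfl : {c} ∈ U.map (χs · m))⟩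
  choose χ hχ using hlim
  obtain ⟨x, hx, hnt, -, hmono⟩ := hreg χ
  have hbound : ∀ᶠ N in (U : Filter ℕ), ∀ i, x i ≤ N :=
    Ultrafilter.of_le atTop (eventually_all.2 fun i => eventually_ge_atTop (x i))
  obtain ⟨N, hle, hagree⟩ := (hbound.and (eventually_all.2 fun i => hχ (x i))).exists
  obtain ⟨i, j, hij⟩ := hχs N x hx hnt hle
  exact hij (by rw [hagree i, hagree j, hmono i j])

theorem Fin.exists_succAbove_comp_eq {α : Type*} {r : ℕ} (χ : α → Fin (r + 1)) (c : Fin (r + 1))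
    {S : Set α} (hS : S.Nonempty) (hc : ∀ a ∈ S, χ a ≠ c) :
    ∃ ψ : α → Fin r, ∀ a ∈ S, c.succAbove (ψ a) = χ a := by
  classical
  obtain ⟨a₀, ha₀⟩ := hS
  obtain ⟨z₀, -⟩ := Fin.exists_succAbove_eq (hc a₀ ha₀)
  refine ⟨fun a => if h : χ a = c then z₀ else (Fin.exists_succAbove_eq h).choose,
    fun a ha => ?_⟩
  simp only [dif_neg (hc a ha)]
  exact (Fin.exists_succAbove_eq (hc a ha)).choose_spec

theorem multSyndeticWith_colourClass (hdil : DilationInvariant p) {r : ℕ} {F : Finset ℕ}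
    (hF : F.Nonempty) (hFpos : ∀ t ∈ F, 0 < t)
    (hreg : ∀ ψ : ℕ → Fin r, ∃ x : Fin s → ℕ, IsSolution p x ∧ IsNontrivial x ∧
      (∀ i, x i ∈ F) ∧ ∀ i j, ψ (x i) = ψ (x j))
    (χ : ℕ → Fin (r + 1))
    (hχ : ¬ ∃ x : Fin s → ℕ, IsSolution p x ∧ IsNontrivial x ∧ ∀ i j, χ (x i) = χ (x j))
    (c : Fin (r + 1)) : MultSyndeticWith F {n : ℕ | 0 < n ∧ χ n = c} := by
  intro n hn
  by_contra! hmiss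
  have hne : ∀ t ∈ (F : Set ℕ), χ (n * t) ≠ c :=
    fun t ht hct => hmiss t ht ⟨Nat.mul_pos hn (hFpos t ht), hct⟩
  obtain ⟨ψ, hψ⟩ := Fin.exists_succAbove_comp_eq (fun t => χ (n * t)) c hF hne
  obtain ⟨x, hx, hnt, hxF, hmono⟩ := hreg ψ
  refine hχ ⟨fun i => n * x i, hx.mul_left hdil hn, hnt.mul_left hn.ne', fun i j => ?_⟩
  rw [← hψ _ (hxF i), ← hψ _ (hxF j), hmono i j]

end

/-- Induction on colours schema: if a dilation invariant system is
`r`-regular over ℕ, there is a nonempty finite set `F` of positive integers such that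
for every `(r+1)`-colouring of ℕ lacking monochromatic non-trivial solutions, each
colour class is multiplicatively `F`-syndetic. -/
theorem induction_on_colours {s k : ℕ}
    (p : Fin k → MvPolynomial (Fin s) ℚ) (hdil : DilationInvariant p)
    (r : ℕ) (hreg : RRegularOver p {n : ℕ | 0 < n} r) :
    ∃ F : Finset ℕ, F.Nonempty ∧ (∀ t ∈ F, 0 < t) ∧
      ∀ χ : ℕ → Fin (r + 1),
        (¬ ∃ x : Fin s → ℕ, IsSolution p x ∧ IsNontrivial x ∧
            ∀ i j, χ (x i) = χ (x j)) →
        ∀ c : Fin (r + 1), MultSyndeticWith F {n : ℕ | 0 < n ∧ χ n = c} := by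
  obtain ⟨N, hN⟩ := hreg.exists_bound
  have hFpos : ∀ t ∈ Finset.Icc 1 (N + 1), 0 < t := fun t ht => (Finset.mem_Icc.1 ht).1
  refine ⟨Finset.Icc 1 (N + 1), ⟨1, by simp⟩, hFpos, fun χ hχ c => ?_⟩
  refine multSyndeticWith_colourClass hdil ⟨1, by simp⟩ hFpos (fun ψ => ?_) χ hχ c
  obtain ⟨x, hx, hnt, hle, hmono⟩ := hN ψ
  exact ⟨x, hx, hnt, fun i => Finset.mem_Icc.2 ⟨hx.1 i, Nat.le_succ_of_le (hle i)⟩, hmono⟩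
end

section
/- Let M ≥ 2 and N ∈ ℕ with N ≥ 18M², let p be a prime with 3N < p < 6N, let S ⊆ ℕ be multiplicatively [M]-syndetic, and let f, g : ℤ/pℤ → [0,1]. Then |Λ_{S∩[N/3]}(f) − Λ_{S∩[N/3]}(g)| ≤ 18M·‖f − g‖_{U³(ℤ/pℤ)}, where S∩[N/3] := S ∩ {1,…,⌊N/3⌋} is viewed as a subset of ℤ/pℤ. -/
/-- The counting functional
`Λ_S(f₁,f₂,f₃) = (1/p)(1/|S|) ∑_{x ∈ ℤ/pℤ} ∑_{d ∈ S} f₁(x) f₂(x+d) f₃(x+2d)`. -/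
noncomputable def Lam (p : ℕ) [NeZero p] (S : Finset (ZMod p))
    (f₁ f₂ f₃ : ZMod p → ℂ) : ℂ :=
  (p : ℂ)⁻¹ * (S.card : ℂ)⁻¹ *
    ∑ x : ZMod p, ∑ d ∈ S, f₁ x * f₂ (x + d) * f₃ (x + 2 * d)

/-- The multiplicative difference operator `Δ_h f(x) = f(x) · conj(f(x+h))`. -/
def diffOp {p : ℕ} (h : ZMod p) (f : ZMod p → ℂ) : ZMod p → ℂ :=
  fun x => f x * (starRingEnd ℂ) (f (x + h))

/-- The Gowers `U³` norm of `f : ℤ/pℤ → ℂ`: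
`‖f‖_{U³} = (𝔼_{x,h₁,h₂,h₃} Δ_{h₁}Δ_{h₂}Δ_{h₃} f(x))^{1/8}`. -/
noncomputable def gowersU3 (p : ℕ) [NeZero p] (f : ZMod p → ℂ) : ℝ :=
  ((∑ x : ZMod p, ∑ h₁ : ZMod p, ∑ h₂ : ZMod p, ∑ h₃ : ZMod p,
      diffOp h₁ (diffOp h₂ (diffOp h₃ f)) x).re / (p : ℝ) ^ 4) ^ ((1 : ℝ) / 8)

/-!
Since `Λ_S` is trilinear, `Λ_S(f) − Λ_S(g)` splits into three terms, each with one argument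
equal to `f − g`. For each term, Cauchy–Schwarz over `d ∈ S` bounds `|Σ_{d∈S} A(d)|²` by
`|S| · Σ_{d ∈ ℤ/pℤ} |A(d)|²`, where `A(d)` counts progressions of difference `d`, and
`Σ_d |A(d)|²` is the sum over `h` of the full progression counts of the differenced functions
`Δ_h fᵢ`. Full counts are controlled by the `U²` norm of any one argument (this needs `2` to be
invertible mod `p`), which produces the `U³` norm of `f − g`. The loss `p / |S|` is at most
`36 M²` because multiplicative syndeticity forces `S ∩ [N/3]` to contain about `N / M²` elements.
-/

open Finset

section GeneralizedVonNeumann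

variable {p : ℕ}

lemma norm_diffOp_le_one {f : ZMod p → ℂ} (hf : ∀ x, ‖f x‖ ≤ 1) (h x : ZMod p) :
    ‖diffOp h f x‖ ≤ 1 := by
  simp only [diffOp, norm_mul, Complex.norm_conj]
  exact mul_le_one₀ (hf x) (norm_nonneg _) (hf _)

variable [NeZero p]

noncomputable def apCount (f₁ f₂ f₃ : ZMod p → ℂ) (d : ZMod p) : ℂ :=
  ∑ x, f₁ x * f₂ (x + d) * f₃ (x + 2 * d)

noncomputable def apTotal (f₁ f₂ f₃ : ZMod p → ℂ) : ℂ :=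
  ∑ d, apCount f₁ f₂ f₃ d

/-- `p³ ‖f‖_{U²}⁴`. -/
noncomputable def u2Sum (f : ZMod p → ℂ) : ℝ :=
  ∑ k, ‖∑ y, diffOp k f y‖ ^ 2

/-- `p⁴ ‖f‖_{U³}⁸`. -/
noncomputable def u3Sum (f : ZMod p → ℂ) : ℝ :=
  ∑ h, u2Sum (diffOp h f)

lemma u2Sum_nonneg (f : ZMod p → ℂ) : 0 ≤ u2Sum f :=
  sum_nonneg fun _ _ => by positivity

lemma u3Sum_nonneg (f : ZMod p → ℂ) : 0 ≤ u3Sum f :=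
  sum_nonneg fun _ _ => u2Sum_nonneg _

lemma norm_sum_le_card {f : ZMod p → ℂ} (hf : ∀ x, ‖f x‖ ≤ 1) : ‖∑ x, f x‖ ≤ p :=
  calc ‖∑ x, f x‖ ≤ ∑ _x : ZMod p, (1 : ℝ) := norm_sum_le_of_le _ fun x _ => hf x
    _ = p := by simp

lemma sum_norm_sq_le_card {f : ZMod p → ℂ} (hf : ∀ x, ‖f x‖ ≤ 1) : ∑ x, ‖f x‖ ^ 2 ≤ p :=
  calc ∑ x, ‖f x‖ ^ 2 ≤ ∑ _x : ZMod p, (1 : ℝ) :=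
        sum_le_sum fun x _ => pow_le_one₀ (norm_nonneg _) (hf x)
    _ = p := by simp

lemma u2Sum_le {f : ZMod p → ℂ} (hf : ∀ x, ‖f x‖ ≤ 1) : u2Sum f ≤ p ^ 3 :=
  calc u2Sum f ≤ ∑ _k : ZMod p, (p : ℝ) ^ 2 := sum_le_sum fun k _ => by
        gcongr; exact norm_sum_le_card (norm_diffOp_le_one hf k)
    _ = p ^ 3 := by simp; ring

noncomputable def apConv (b c : ZMod p → ℂ) (x : ZMod p) : ℂ :=
  ∑ y, b y * c (2 * y - x)

lemma apTotal_eq_sum_mul_apConv (a b c : ZMod p → ℂ) :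
    apTotal a b c = ∑ x, a x * apConv b c x := by
  simp only [apTotal, apCount, apConv]
  rw [sum_comm]
  refine sum_congr rfl fun x _ => ?_
  rw [mul_sum]
  refine Fintype.sum_equiv (Equiv.addLeft x) _ _ fun d => ?_
  rw [Equiv.coe_addLeft, show 2 * (x + d) - x = x + 2 * d by ring]
  ring

lemma sum_apConv_mul_conj (b c : ZMod p → ℂ) :
    ∑ x, apConv b c x * starRingEnd ℂ (apConv b c x) =
      ∑ k, (∑ y, diffOp k b y) * ∑ u, diffOp (2 * k) c u := by
  simp only [apConv, diffOp, map_sum, map_mul, sum_mul_sum]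
  conv_lhs => rw [sum_comm]
  conv_rhs => rw [sum_comm]
  refine sum_congr rfl fun y _ => ?_
  conv_rhs => rw [sum_comm]
  refine Fintype.sum_equiv (Equiv.subLeft (2 * y)) _ _ fun x => ?_
  refine Fintype.sum_equiv (Equiv.subRight y) _ _ fun z => ?_
  simp only [Equiv.subLeft_apply, Equiv.subRight_apply]
  rw [show y + (z - y) = z by ring, show 2 * y - x + 2 * (z - y) = 2 * z - x by ring]
  ring

lemma sum_norm_sq_apConv_sq_le (h2 : IsUnit (2 : ZMod p)) (b c : ZMod p → ℂ) :
    (∑ x, ‖apConv b c x‖ ^ 2) ^ 2 ≤ u2Sum b * u2Sum c := by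
  have hle : ∑ x, ‖apConv b c x‖ ^ 2 ≤
      ∑ k, ‖∑ y, diffOp k b y‖ * ‖∑ u, diffOp (2 * k) c u‖ :=
    calc ∑ x, ‖apConv b c x‖ ^ 2 = ‖∑ x, apConv b c x * starRingEnd ℂ (apConv b c x)‖ := by
          simp_rw [Complex.mul_conj']
          norm_cast
          rw [Real.norm_of_nonneg (by positivity)]
      _ ≤ _ := by
          rw [sum_apConv_mul_conj]
          exact (norm_sum_le _ _).trans_eq (by simp_rw [norm_mul])
  have hdilate : ∑ k, ‖∑ u, diffOp (2 * k) c u‖ ^ 2 = u2Sum c :=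
    Fintype.sum_equiv (Units.mulLeft h2.unit) _ _ fun _ => rfl
  calc (∑ x, ‖apConv b c x‖ ^ 2) ^ 2
      ≤ (∑ k, ‖∑ y, diffOp k b y‖ * ‖∑ u, diffOp (2 * k) c u‖) ^ 2 := by gcongr
    _ ≤ u2Sum b * ∑ k, ‖∑ u, diffOp (2 * k) c u‖ ^ 2 := sum_mul_sq_le_sq_mul_sq _ _ _
    _ = u2Sum b * u2Sum c := by rw [hdilate]

lemma norm_apTotal_pow_four_le (h2 : IsUnit (2 : ZMod p)) {a : ZMod p → ℂ}
    (ha : ∀ x, ‖a x‖ ≤ 1) (b c : ZMod p → ℂ) :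
    ‖apTotal a b c‖ ^ 4 ≤ p ^ 2 * (u2Sum b * u2Sum c) := by
  have hsq : ‖apTotal a b c‖ ^ 2 ≤ p * ∑ x, ‖apConv b c x‖ ^ 2 :=
    calc ‖apTotal a b c‖ ^ 2 ≤ (∑ x, ‖a x‖ * ‖apConv b c x‖) ^ 2 := by
          rw [apTotal_eq_sum_mul_apConv]
          gcongr
          exact (norm_sum_le _ _).trans_eq (by simp_rw [norm_mul])
      _ ≤ (∑ x, ‖a x‖ ^ 2) * ∑ x, ‖apConv b c x‖ ^ 2 := sum_mul_sq_le_sq_mul_sq _ _ _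
      _ ≤ p * ∑ x, ‖apConv b c x‖ ^ 2 := by gcongr; exact sum_norm_sq_le_card ha
  calc ‖apTotal a b c‖ ^ 4 = (‖apTotal a b c‖ ^ 2) ^ 2 := by ring
    _ ≤ (p * ∑ x, ‖apConv b c x‖ ^ 2) ^ 2 := by gcongr
    _ = p ^ 2 * (∑ x, ‖apConv b c x‖ ^ 2) ^ 2 := by ring
    _ ≤ p ^ 2 * (u2Sum b * u2Sum c) := by gcongr; exact sum_norm_sq_apConv_sq_le h2 b c

lemma apTotal_reverse (a b c : ZMod p → ℂ) : apTotal a b c = apTotal c b a := by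
  simp only [apTotal, apCount]
  refine Fintype.sum_equiv (Equiv.neg _) _ _ fun d => ?_
  refine Fintype.sum_equiv (Equiv.addRight (2 * d)) _ _ fun x => ?_
  simp only [Equiv.neg_apply, Equiv.coe_addRight]
  rw [show x + 2 * d + -d = x + d by ring, show x + 2 * d + 2 * -d = x by ring]
  ring

lemma norm_apTotal_pow_four_le_right (h2 : IsUnit (2 : ZMod p)) {a b : ZMod p → ℂ}
    (ha : ∀ x, ‖a x‖ ≤ 1) (hb : ∀ x, ‖b x‖ ≤ 1) (c : ZMod p → ℂ) :
    ‖apTotal a b c‖ ^ 4 ≤ p ^ 5 * u2Sum c :=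
  calc ‖apTotal a b c‖ ^ 4 ≤ p ^ 2 * (u2Sum b * u2Sum c) := norm_apTotal_pow_four_le h2 ha b c
    _ ≤ p ^ 2 * (p ^ 3 * u2Sum c) := by gcongr; exacts [u2Sum_nonneg c, u2Sum_le hb]
    _ = p ^ 5 * u2Sum c := by ring

lemma norm_apTotal_pow_four_le_mid (h2 : IsUnit (2 : ZMod p)) {a c : ZMod p → ℂ}
    (ha : ∀ x, ‖a x‖ ≤ 1) (hc : ∀ x, ‖c x‖ ≤ 1) (b : ZMod p → ℂ) :
    ‖apTotal a b c‖ ^ 4 ≤ p ^ 5 * u2Sum b :=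
  calc ‖apTotal a b c‖ ^ 4 ≤ p ^ 2 * (u2Sum b * u2Sum c) := norm_apTotal_pow_four_le h2 ha b c
    _ ≤ p ^ 2 * (u2Sum b * p ^ 3) := by gcongr; exacts [u2Sum_nonneg b, u2Sum_le hc]
    _ = p ^ 5 * u2Sum b := by ring

lemma norm_apTotal_pow_four_le_left (h2 : IsUnit (2 : ZMod p)) {b c : ZMod p → ℂ}
    (hb : ∀ x, ‖b x‖ ≤ 1) (hc : ∀ x, ‖c x‖ ≤ 1) (a : ZMod p → ℂ) :
    ‖apTotal a b c‖ ^ 4 ≤ p ^ 5 * u2Sum a := by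
  rw [apTotal_reverse]
  exact norm_apTotal_pow_four_le_right h2 hc hb a

lemma sum_norm_sq_apCount (f₁ f₂ f₃ : ZMod p → ℂ) :
    ((∑ d, ‖apCount f₁ f₂ f₃ d‖ ^ 2 : ℝ) : ℂ) =
      ∑ h, apTotal (diffOp h f₁) (diffOp h f₂) (diffOp h f₃) := by
  push_cast
  simp_rw [← Complex.mul_conj']
  simp only [apTotal, apCount, diffOp, map_sum, map_mul, sum_mul_sum]
  conv_rhs => rw [sum_comm]
  refine sum_congr rfl fun d _ => ?_
  conv_rhs => rw [sum_comm]
  refine sum_congr rfl fun x _ => ?_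
  refine Fintype.sum_equiv (Equiv.subRight x) _ _ fun y => ?_
  rw [Equiv.subRight_apply, show x + (y - x) = y by ring, show x + d + (y - x) = y + d by ring,
    show x + 2 * d + (y - x) = y + 2 * d by ring]
  ring

lemma sum_norm_sq_apCount_pow_four_le {f₁ f₂ f₃ t : ZMod p → ℂ}
    (hT : ∀ h, ‖apTotal (diffOp h f₁) (diffOp h f₂) (diffOp h f₃)‖ ^ 4 ≤
      p ^ 5 * u2Sum (diffOp h t)) :
    (∑ d, ‖apCount f₁ f₂ f₃ d‖ ^ 2) ^ 4 ≤ p ^ 8 * u3Sum t := by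
  have hle : ∑ d, ‖apCount f₁ f₂ f₃ d‖ ^ 2 ≤
      ∑ h, ‖apTotal (diffOp h f₁) (diffOp h f₂) (diffOp h f₃)‖ :=
    calc ∑ d, ‖apCount f₁ f₂ f₃ d‖ ^ 2 = ‖((∑ d, ‖apCount f₁ f₂ f₃ d‖ ^ 2 : ℝ) : ℂ)‖ := by
          rw [Complex.norm_real, Real.norm_of_nonneg (by positivity)]
      _ ≤ _ := by rw [sum_norm_sq_apCount]; exact norm_sum_le _ _
  calc (∑ d, ‖apCount f₁ f₂ f₃ d‖ ^ 2) ^ 4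
      ≤ (∑ h, ‖apTotal (diffOp h f₁) (diffOp h f₂) (diffOp h f₃)‖) ^ 4 := by gcongr
    _ ≤ #(univ : Finset (ZMod p)) ^ 3 *
          ∑ h, ‖apTotal (diffOp h f₁) (diffOp h f₂) (diffOp h f₃)‖ ^ 4 :=
        pow_sum_le_card_mul_sum_pow (fun _ _ => norm_nonneg _) 3
    _ ≤ p ^ 3 * ∑ h, p ^ 5 * u2Sum (diffOp h t) := by
        rw [card_univ, ZMod.card]
        gcongr with h
        exact hT h
    _ = p ^ 8 * u3Sum t := by rw [u3Sum, ← mul_sum]; ring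

lemma norm_lam_pow_eight_mul_le (S : Finset (ZMod p)) {f₁ f₂ f₃ t : ZMod p → ℂ}
    (hT : ∀ h, ‖apTotal (diffOp h f₁) (diffOp h f₂) (diffOp h f₃)‖ ^ 4 ≤
      p ^ 5 * u2Sum (diffOp h t)) :
    ‖Lam p S f₁ f₂ f₃‖ ^ 8 * #S ^ 4 ≤ u3Sum t := by
  obtain rfl | hS := S.eq_empty_or_nonempty
  · simpa using u3Sum_nonneg t
  have hLam : Lam p S f₁ f₂ f₃ = (p : ℂ)⁻¹ * (#S : ℂ)⁻¹ * ∑ d ∈ S, apCount f₁ f₂ f₃ d := by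
    rw [Lam, sum_comm]
    rfl
  have hCS : ‖∑ d ∈ S, apCount f₁ f₂ f₃ d‖ ^ 2 ≤ #S * ∑ d, ‖apCount f₁ f₂ f₃ d‖ ^ 2 :=
    calc ‖∑ d ∈ S, apCount f₁ f₂ f₃ d‖ ^ 2 ≤ (∑ d ∈ S, ‖apCount f₁ f₂ f₃ d‖) ^ 2 := by
          gcongr; exact norm_sum_le _ _
      _ ≤ #S * ∑ d ∈ S, ‖apCount f₁ f₂ f₃ d‖ ^ 2 := sq_sum_le_card_mul_sum_sq
      _ ≤ #S * ∑ d, ‖apCount f₁ f₂ f₃ d‖ ^ 2 := by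
          gcongr; exact subset_univ S
  have hZ : ‖∑ d ∈ S, apCount f₁ f₂ f₃ d‖ ^ 8 ≤ #S ^ 4 * (p ^ 8 * u3Sum t) :=
    calc ‖∑ d ∈ S, apCount f₁ f₂ f₃ d‖ ^ 8 = (‖∑ d ∈ S, apCount f₁ f₂ f₃ d‖ ^ 2) ^ 4 := by ring
      _ ≤ (#S * ∑ d, ‖apCount f₁ f₂ f₃ d‖ ^ 2) ^ 4 := by gcongr
      _ = #S ^ 4 * (∑ d, ‖apCount f₁ f₂ f₃ d‖ ^ 2) ^ 4 := by ring
      _ ≤ #S ^ 4 * (p ^ 8 * u3Sum t) := by gcongr; exact sum_norm_sq_apCount_pow_four_le hT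
  have hp : (0 : ℝ) < p := by exact_mod_cast NeZero.pos p
  have hS0 : (0 : ℝ) < #S := by exact_mod_cast hS.card_pos
  rw [hLam, norm_mul, norm_mul, norm_inv, norm_inv, Complex.norm_natCast, Complex.norm_natCast]
  calc ((p : ℝ)⁻¹ * (#S : ℝ)⁻¹ * ‖∑ d ∈ S, apCount f₁ f₂ f₃ d‖) ^ 8 * #S ^ 4
      = ‖∑ d ∈ S, apCount f₁ f₂ f₃ d‖ ^ 8 / (#S ^ 4 * p ^ 8) := by field_simp
    _ ≤ u3Sum t := by rw [div_le_iff₀ (by positivity)]; linarith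

lemma sum_sum_diffOp (f : ZMod p → ℂ) :
    ∑ x, ∑ h, diffOp h f x = ((‖∑ x, f x‖ ^ 2 : ℝ) : ℂ) := by
  rw [Complex.ofReal_pow, ← Complex.mul_conj', map_sum, sum_mul_sum]
  exact sum_congr rfl fun x _ => Fintype.sum_equiv (Equiv.addLeft x) _ _ fun _ => rfl

lemma sum_diffOp_diffOp_diffOp (f : ZMod p → ℂ) :
    ∑ x, ∑ h₁, ∑ h₂, ∑ h₃, diffOp h₁ (diffOp h₂ (diffOp h₃ f)) x = (u3Sum f : ℂ) :=
  calc ∑ x, ∑ h₁, ∑ h₂, ∑ h₃, diffOp h₁ (diffOp h₂ (diffOp h₃ f)) x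
      = ∑ x, ∑ h₂, ∑ h₃, ∑ h₁, diffOp h₁ (diffOp h₂ (diffOp h₃ f)) x :=
        sum_congr rfl fun _ _ => by rw [sum_comm]; exact sum_congr rfl fun _ _ => sum_comm
    _ = ∑ h₂, ∑ h₃, ∑ x, ∑ h₁, diffOp h₁ (diffOp h₂ (diffOp h₃ f)) x := by
        rw [sum_comm]; exact sum_congr rfl fun _ _ => sum_comm
    _ = ∑ h₃, ∑ h₂, ∑ x, ∑ h₁, diffOp h₁ (diffOp h₂ (diffOp h₃ f)) x := sum_comm
    _ = u3Sum f := by simp only [u3Sum, u2Sum, sum_sum_diffOp]; push_cast; rfl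

lemma gowersU3_nonneg (f : ZMod p → ℂ) : 0 ≤ gowersU3 p f :=
  Real.rpow_nonneg (by
    rw [sum_diffOp_diffOp_diffOp, Complex.ofReal_re]; exact div_nonneg (u3Sum_nonneg f) (by positivity)) _

lemma gowersU3_pow_eight (f : ZMod p → ℂ) : gowersU3 p f ^ 8 = u3Sum f / p ^ 4 := by
  have := u3Sum_nonneg f
  rw [gowersU3, sum_diffOp_diffOp_diffOp, Complex.ofReal_re, ← Real.rpow_natCast,
    ← Real.rpow_mul (by positivity)]
  norm_num

lemma norm_lam_le_mul_gowersU3 (S : Finset (ZMod p)) {C : ℝ} (hC0 : 0 ≤ C)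
    (hC : (p : ℝ) ≤ C ^ 2 * #S) {f₁ f₂ f₃ t : ZMod p → ℂ}
    (hT : ∀ h, ‖apTotal (diffOp h f₁) (diffOp h f₂) (diffOp h f₃)‖ ^ 4 ≤
      p ^ 5 * u2Sum (diffOp h t)) :
    ‖Lam p S f₁ f₂ f₃‖ ≤ C * gowersU3 p t := by
  have hp : (0 : ℝ) < p := by exact_mod_cast NeZero.pos p
  have hp4 : (p : ℝ) ^ 4 ≤ C ^ 8 * #S ^ 4 :=
    calc (p : ℝ) ^ 4 ≤ (C ^ 2 * #S) ^ 4 := by gcongr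
      _ = C ^ 8 * #S ^ 4 := by ring
  have hLam := norm_lam_pow_eight_mul_le S hT
  refine le_of_pow_le_pow_left₀ (n := 8) (by norm_num)
    (mul_nonneg hC0 (gowersU3_nonneg t)) ?_
  rw [mul_pow, gowersU3_pow_eight, mul_div_assoc', le_div_iff₀ (by positivity)]
  calc ‖Lam p S f₁ f₂ f₃‖ ^ 8 * p ^ 4 ≤ ‖Lam p S f₁ f₂ f₃‖ ^ 8 * (C ^ 8 * #S ^ 4) := by gcongr
    _ = C ^ 8 * (‖Lam p S f₁ f₂ f₃‖ ^ 8 * #S ^ 4) := by ring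
    _ ≤ C ^ 8 * u3Sum t := by gcongr

lemma lam_sub_lam (S : Finset (ZMod p)) (f g : ZMod p → ℂ) :
    Lam p S f f f - Lam p S g g g =
      Lam p S (fun x => f x - g x) f f + Lam p S g (fun x => f x - g x) f +
        Lam p S g g (fun x => f x - g x) := by
  simp only [Lam, ← mul_sub, ← mul_add, ← sum_sub_distrib, ← sum_add_distrib]
  congr 1
  exact sum_congr rfl fun _ _ => sum_congr rfl fun _ _ => by ring

end GeneralizedVonNeumann

lemma MultSyndeticWith.div_le_mul_card {M : ℕ} {S : Set ℕ} [DecidablePred (· ∈ S)]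
    (hS : MultSyndeticWith (Icc 1 M) S) (L : ℕ) : L / M ≤ M * #{n ∈ Icc 1 L | n ∈ S} := by
  choose! t ht hts using hS
  have hmaps : ∀ n ∈ Icc 1 (L / M), n * t n ∈ {n ∈ Icc 1 L | n ∈ S} := by
    intro n hn
    simp only [mem_Icc] at hn
    have htM := mem_Icc.1 (ht n (by omega))
    have hle : n * t n ≤ L / M * M := Nat.mul_le_mul hn.2 htM.2
    simp only [mem_filter, mem_Icc]
    exact ⟨⟨Nat.mul_le_mul hn.1 htM.1, hle.trans (Nat.div_mul_le_self L M)⟩,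
      hts n (by omega)⟩
  have hfiber : ∀ s ∈ {n ∈ Icc 1 L | n ∈ S}, #{n ∈ Icc 1 (L / M) | n * t n = s} ≤ M := by
    intro s _
    calc #{n ∈ Icc 1 (L / M) | n * t n = s} ≤ #((Icc 1 M).image (s / ·)) := by
          refine card_le_card fun n hn => ?_
          simp only [mem_filter, mem_Icc] at hn
          refine mem_image.2 ⟨t n, ht n (by omega), ?_⟩
          rw [← hn.2, Nat.mul_div_cancel n (mem_Icc.1 (ht n (by omega))).1]
      _ ≤ M := card_image_le.trans (by simp)
  simpa using card_le_mul_card_image_of_maps_to hmaps M hfiber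

lemma MultSyndeticWith.le_six_mul_sq_mul_card {M N : ℕ} {S : Set ℕ} [DecidablePred (· ∈ S)]
    (hS : MultSyndeticWith (Icc 1 M) S) (hN : 3 * M ≤ N) :
    N ≤ 6 * M ^ 2 * #{n ∈ Icc 1 (N / 3) | n ∈ S} := by
  obtain ⟨t, ht, -⟩ := hS 1 one_pos
  have hM : 0 < M := by simp only [mem_Icc] at ht; omega
  have hq := hS.div_le_mul_card (N / 3)
  rw [Nat.div_div_eq_div_mul] at hq
  have hq1 : 1 ≤ N / (3 * M) := (Nat.le_div_iff_mul_le (by positivity)).2 (by omega)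
  have hNq : N < 3 * M * (N / (3 * M) + 1) := Nat.lt_mul_div_succ N (by positivity)
  nlinarith

lemma card_image_natCast_of_lt {p : ℕ} {T : Finset ℕ} (hT : ∀ n ∈ T, n < p) :
    #(T.image (Nat.cast : ℕ → ZMod p)) = #T :=
  card_image_of_injOn fun a ha b hb hab => by
    rw [← ZMod.val_cast_of_lt (hT a ha), hab, ZMod.val_cast_of_lt (hT b hb)]

lemma ZMod.isUnit_two {p : ℕ} (hp : p.Prime) (hp2 : p ≠ 2) : IsUnit (2 : ZMod p) := by
  have := ZMod.isUnit_prime_of_not_dvd (n := p) Nat.prime_two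
    fun h => hp2 ((Nat.prime_dvd_prime_iff_eq Nat.prime_two hp).1 h).symm
  exact_mod_cast this

open Classical in
theorem lam_U3_control_general (M N p : ℕ) (hN : 18 * M ^ 2 ≤ N)
    (hp : p.Prime) [NeZero p] (hp3 : 3 * N < p) (hp6 : p < 6 * N)
    (S : Set ℕ) (hS : MultSyndeticWith (Finset.Icc 1 M) S)
    (f g : ZMod p → ℝ)
    (hf : ∀ x, f x ∈ Set.Icc (0 : ℝ) 1) (hg : ∀ x, g x ∈ Set.Icc (0 : ℝ) 1) :
    ‖(Lam p (((Finset.Icc 1 (N / 3)).filter (fun n => n ∈ S)).image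
            (Nat.cast : ℕ → ZMod p))
          (fun x => (f x : ℂ)) (fun x => (f x : ℂ)) (fun x => (f x : ℂ)) -
         Lam p (((Finset.Icc 1 (N / 3)).filter (fun n => n ∈ S)).image
            (Nat.cast : ℕ → ZMod p))
          (fun x => (g x : ℂ)) (fun x => (g x : ℂ)) (fun x => (g x : ℂ)))‖ ≤
      18 * (M : ℝ) * gowersU3 p (fun x => (f x : ℂ) - (g x : ℂ)) := by
  set T := (Icc 1 (N / 3)).filter (fun n => n ∈ S)
  have h2 : IsUnit (2 : ZMod p) := ZMod.isUnit_two hp (by omega)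
  have hcard : (p : ℝ) ≤ (6 * M) ^ 2 * #(T.image (Nat.cast : ℕ → ZMod p)) := by
    rw [card_image_natCast_of_lt fun n hn => by
      have := (mem_Icc.1 (mem_filter.1 hn).1).2; omega]
    have := hS.le_six_mul_sq_mul_card (N := N) (by nlinarith)
    exact_mod_cast (by nlinarith : p ≤ (6 * M) ^ 2 * #T)
  have hF : ∀ x, ‖(f x : ℂ)‖ ≤ 1 := fun x => by
    rw [Complex.norm_real, Real.norm_of_nonneg (hf x).1]; exact (hf x).2
  have hG : ∀ x, ‖(g x : ℂ)‖ ≤ 1 := fun x => by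
    rw [Complex.norm_real, Real.norm_of_nonneg (hg x).1]; exact (hg x).2
  rw [lam_sub_lam]
  calc _ ≤ _ := norm_add₃_le
    _ ≤ 6 * M * gowersU3 p (fun x => (f x : ℂ) - (g x : ℂ)) +
          6 * M * gowersU3 p (fun x => (f x : ℂ) - (g x : ℂ)) +
          6 * M * gowersU3 p (fun x => (f x : ℂ) - (g x : ℂ)) := by
        gcongr <;> refine norm_lam_le_mul_gowersU3 _ (by positivity) hcard fun h => ?_
        · exact norm_apTotal_pow_four_le_left h2 (norm_diffOp_le_one hF h)
            (norm_diffOp_le_one hF h) _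
        · exact norm_apTotal_pow_four_le_mid h2 (norm_diffOp_le_one hG h)
            (norm_diffOp_le_one hF h) _
        · exact norm_apTotal_pow_four_le_right h2 (norm_diffOp_le_one hG h)
            (norm_diffOp_le_one hG h) _
    _ = 18 * M * gowersU3 p (fun x => (f x : ℂ) - (g x : ℂ)) := by ring

open Classical in
/-- `U³` controls `Λ_{S ∩ [N/3]}`: for a multiplicatively
`[M]`-syndetic `S` and `f, g : ℤ/pℤ → [0,1]`, if `N ≥ 18M²` then
`|Λ_{S∩[N/3]}(f) − Λ_{S∩[N/3]}(g)| ≤ 18M ‖f − g‖_{U³(ℤ/pℤ)}`. -/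
theorem lam_U3_control (M N p : ℕ) (hM : 2 ≤ M) (hN : 18 * M ^ 2 ≤ N)
    (hp : p.Prime) [NeZero p] (hp3 : 3 * N < p) (hp6 : p < 6 * N)
    (S : Set ℕ) (hS : MultSyndeticWith (Finset.Icc 1 M) S)
    (f g : ZMod p → ℝ)
    (hf : ∀ x, f x ∈ Set.Icc (0 : ℝ) 1) (hg : ∀ x, g x ∈ Set.Icc (0 : ℝ) 1) :
    ‖(Lam p (((Finset.Icc 1 (N / 3)).filter (fun n => n ∈ S)).image
            (Nat.cast : ℕ → ZMod p))
          (fun x => (f x : ℂ)) (fun x => (f x : ℂ)) (fun x => (f x : ℂ)) -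
         Lam p (((Finset.Icc 1 (N / 3)).filter (fun n => n ∈ S)).image
            (Nat.cast : ℕ → ZMod p))
          (fun x => (g x : ℂ)) (fun x => (g x : ℂ)) (fun x => (g x : ℂ)))‖ ≤
      18 * (M : ℝ) * gowersU3 p (fun x => (f x : ℂ) - (g x : ℂ)) :=
  lam_U3_control_general M N p hN hp hp3 hp6 S hS f g hf hg
end
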